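/- The sequence (O_k) of optimal values is not monotone: O_9 = 231/206 > 28/25 = O_10. In particular, there exists C ∈ 𝔖_10 with g_{S_10}(C) = 28/25 < 231/206. -/

import Mathlib

open Finset Filter

/-- Membership in the affine set 𝔖ₖ. -/
def inSk (k : ℕ) (C : Fin k → Matrix (Fin k) (Fin k) ℝ) : Prop :=
  ∀ ℓ : Fin k,
    (∀ i : Fin k, i ≠ ℓ → ∑ j, C ℓ i j = 0) ∧
    (∀ j : Fin k, j ≠ ℓ → ∑ i, C ℓ i j = 0) ∧
    (∑ i, ∑ j, C ℓ i j = 1)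

/-- A k-sample: nonempty subset of [k]×[k] with pairwise distinct second coordinates. -/
def IsSample {k : ℕ} (s : Finset (Fin k × Fin k)) : Prop :=
  s.Nonempty ∧ ∀ p ∈ s, ∀ q ∈ s, p ≠ q → p.2 ≠ q.2

/-- g_s^{(ℓ)}(C) -/
def gPart {k : ℕ} (s : Finset (Fin k × Fin k)) (C : Fin k → Matrix (Fin k) (Fin k) ℝ)
    (ℓ : Fin k) : ℝ :=
  ∑ p ∈ s, C ℓ p.1 p.2

/-- g_s(C) -/
def gSample {k : ℕ} (s : Finset (Fin k × Fin k)) (C : Fin k → Matrix (Fin k) (Fin k) ℝ) : ℝ :=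
  ∑ ℓ : Fin k, |gPart s C ℓ|

/-- g_{S_k}(C) : the maximum of g_s(C) over all k-samples s. -/
noncomputable def gMax (k : ℕ) (C : Fin k → Matrix (Fin k) (Fin k) ℝ) : ℝ :=
  ⨆ s : {s : Finset (Fin k × Fin k) // IsSample s}, gSample s.1 C

/-- multiplicity of ℓ in the multiset of coordinates of elements of s -/
def mult {k : ℕ} (s : Finset (Fin k × Fin k)) (ℓ : Fin k) : ℕ :=
  (s.filter (fun p => p.1 = ℓ)).card + (s.filter (fun p => p.2 = ℓ)).card

/-- β(s): number of distinct indices among coordinates of s -/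
def beta {k : ℕ} (s : Finset (Fin k × Fin k)) : ℕ :=
  (s.image Prod.fst ∪ s.image Prod.snd).card

/-- γ(s): number of diagonal elements of s -/
def gamma {k : ℕ} (s : Finset (Fin k × Fin k)) : ℕ :=
  (s.filter (fun p => p.1 = p.2)).card

/-- the strong homogeneous flow C*_k -/
noncomputable def Cstar (k : ℕ) : Fin k → Matrix (Fin k) (Fin k) ℝ :=
  fun ℓ i j =>
    if i = ℓ ∧ j = ℓ then 2/(k:ℝ) - 1/(k:ℝ)^2
    else if i = ℓ ∨ j = ℓ then 1/(k:ℝ) - 1/(k:ℝ)^2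
    else -1/(k:ℝ)^2

/-- the Sym(k)-invariant tuple with parameters x (i=j=ℓ), y (i=j≠ℓ),
a (exactly one of i,j equals ℓ), b (otherwise) -/
def Cfix (k : ℕ) (x y a b : ℝ) : Fin k → Matrix (Fin k) (Fin k) ℝ :=
  fun ℓ i j =>
    if i = ℓ ∧ j = ℓ then x
    else if i = j then y
    else if i = ℓ ∨ j = ℓ then a
    else b

/-- The Sym(k)-action on tuples of matrices. -/
def permAct {k : ℕ} (σ : Equiv.Perm (Fin k)) (C : Fin k → Matrix (Fin k) (Fin k) ℝ) :
    Fin k → Matrix (Fin k) (Fin k) ℝ :=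
  fun ℓ i j => C (σ⁻¹ ℓ) (σ⁻¹ i) (σ⁻¹ j)

/-- optimal value O_k -/
noncomputable def Ovalue (k : ℕ) : ℝ := sInf {y | ∃ C, inSk k C ∧ gMax k C = y}

lemma gSample_le_gMax {k : ℕ} {s : Finset (Fin k × Fin k)} (hs : IsSample s)
    (C : Fin k → Matrix (Fin k) (Fin k) ℝ) : gSample s C ≤ gMax k C := by
  have : Finite {s : Finset (Fin k × Fin k) // IsSample s} := Subtype.finite
  exact le_ciSup (f := fun s : {s : Finset (Fin k × Fin k) // IsSample s} => gSample s.1 C)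
    (Set.Finite.bddAbove (Set.finite_range _)) ⟨s, hs⟩

def chi (P : Prop) [Decidable P] : ℝ := if P then 1 else 0

lemma Cfix_eq (k : ℕ) (x y a b : ℝ) (ℓ i j : Fin k) :
    Cfix k x y a b ℓ i j
      = b + (y - b) * chi (i = j) + (a - b) * (chi (i = ℓ) + chi (j = ℓ))
        + (x - y - 2*a + 2*b) * (chi (i = ℓ) * chi (j = ℓ)) := by
  unfold Cfix chi
  by_cases h1 : i = ℓ
  · by_cases h2 : j = ℓ
    · rw [if_pos (⟨h1, h2⟩ : i = ℓ ∧ j = ℓ), if_pos h1, if_pos h2, if_pos (h1.trans h2.symm)]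
      ring
    · rw [if_neg (by tauto : ¬(i = ℓ ∧ j = ℓ)), if_neg (by rintro rfl; exact h2 h1),
        if_pos (Or.inl h1), if_pos h1, if_neg h2,
        if_neg (show ¬i = j by rintro rfl; exact h2 h1)]
      ring
  · by_cases h2 : j = ℓ
    · rw [if_neg (by tauto : ¬(i = ℓ ∧ j = ℓ)), if_neg (by rintro rfl; exact h1 h2),
        if_pos (Or.inr h2), if_neg h1, if_pos h2,
        if_neg (show ¬i = j by rintro rfl; exact h1 h2)]
      ring
    · by_cases h3 : i = j
      · rw [if_neg (by tauto : ¬(i = ℓ ∧ j = ℓ)), if_pos h3, if_neg h1, if_neg h2, if_pos h3]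
        ring
      · rw [if_neg (by tauto : ¬(i = ℓ ∧ j = ℓ)), if_neg h3, if_neg (by tauto : ¬(i = ℓ ∨ j = ℓ)),
          if_neg h1, if_neg h2, if_neg h3]
        ring

noncomputable def Cbar {k : ℕ} (C : Fin k → Matrix (Fin k) (Fin k) ℝ) :
    Fin k → Matrix (Fin k) (Fin k) ℝ :=
  fun ℓ i j => (∑ σ : Equiv.Perm (Fin k), C (σ⁻¹ ℓ) (σ⁻¹ i) (σ⁻¹ j)) / (Nat.factorial k)

-- sample mapped through a permutation
lemma gSample_perm_le {k : ℕ} (C : Fin k → Matrix (Fin k) (Fin k) ℝ)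
    {s : Finset (Fin k × Fin k)} (hs : IsSample s) (σ : Equiv.Perm (Fin k)) :
    ∑ ℓ : Fin k, |∑ p ∈ s, C (σ⁻¹ ℓ) (σ⁻¹ p.1) (σ⁻¹ p.2)| ≤ gMax k C := by
  set s' : Finset (Fin k × Fin k) := s.image (Prod.map ⇑σ⁻¹ ⇑σ⁻¹) with hs'
  have hinj : Function.Injective (Prod.map ⇑σ⁻¹ ⇑σ⁻¹ : Fin k × Fin k → Fin k × Fin k) :=
    Function.Injective.prodMap σ⁻¹.injective σ⁻¹.injective
  have hsamp : IsSample s' := by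
    constructor
    · exact hs.1.image _
    · rintro p hp q hq hne
      obtain ⟨u, hu, rfl⟩ := Finset.mem_image.1 hp
      obtain ⟨v, hv, rfl⟩ := Finset.mem_image.1 hq
      have huv : u ≠ v := fun h => hne (by rw [h])
      have := hs.2 u hu v hv huv
      simpa [Prod.map] using fun h => this (σ⁻¹.injective h)
  have hval : ∀ ℓ, ∑ p ∈ s, C (σ⁻¹ ℓ) (σ⁻¹ p.1) (σ⁻¹ p.2) = gPart s' C (σ⁻¹ ℓ) := by
    intro ℓ
    rw [hs', gPart, Finset.sum_image (fun u _ v _ h => hinj h)]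
    rfl
  calc ∑ ℓ : Fin k, |∑ p ∈ s, C (σ⁻¹ ℓ) (σ⁻¹ p.1) (σ⁻¹ p.2)|
      = ∑ ℓ : Fin k, |gPart s' C (σ⁻¹ ℓ)| := by simp only [hval]
    _ = ∑ ℓ : Fin k, |gPart s' C ℓ| :=
        Fintype.sum_equiv (σ⁻¹ : Equiv.Perm (Fin k)) _ _ (fun ℓ => rfl)
    _ = gSample s' C := rfl
    _ ≤ gMax k C := gSample_le_gMax hsamp C

lemma gSample_Cbar_le {k : ℕ} (C : Fin k → Matrix (Fin k) (Fin k) ℝ)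
    {s : Finset (Fin k × Fin k)} (hs : IsSample s) :
    gSample s (Cbar C) ≤ gMax k C := by
  have hk0 : (0:ℝ) < (Nat.factorial k : ℝ) := by positivity
  have hcard : (Fintype.card (Equiv.Perm (Fin k)) : ℝ) = (Nat.factorial k : ℝ) := by
    rw [Fintype.card_perm, Fintype.card_fin]
  have h1 : ∀ ℓ, gPart s (Cbar C) ℓ
      = (∑ σ : Equiv.Perm (Fin k), ∑ p ∈ s, C (σ⁻¹ ℓ) (σ⁻¹ p.1) (σ⁻¹ p.2)) / (Nat.factorial k) := by
    intro ℓ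
    unfold gPart Cbar
    rw [← Finset.sum_div]
    congr 1
    exact Finset.sum_comm
  calc gSample s (Cbar C)
      = ∑ ℓ : Fin k, |(∑ σ : Equiv.Perm (Fin k), ∑ p ∈ s, C (σ⁻¹ ℓ) (σ⁻¹ p.1) (σ⁻¹ p.2)) / (Nat.factorial k)| := by
        unfold gSample; simp only [h1]
    _ ≤ ∑ ℓ : Fin k, (∑ σ : Equiv.Perm (Fin k), |∑ p ∈ s, C (σ⁻¹ ℓ) (σ⁻¹ p.1) (σ⁻¹ p.2)|) / (Nat.factorial k) := by
        apply Finset.sum_le_sum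
        intro ℓ _
        rw [abs_div, abs_of_pos hk0]
        gcongr
        exact Finset.abs_sum_le_sum_abs _ _
    _ = (∑ σ : Equiv.Perm (Fin k), ∑ ℓ : Fin k, |∑ p ∈ s, C (σ⁻¹ ℓ) (σ⁻¹ p.1) (σ⁻¹ p.2)|) / (Nat.factorial k) := by
        rw [← Finset.sum_div, Finset.sum_comm]
    _ ≤ (∑ _σ : Equiv.Perm (Fin k), gMax k C) / (Nat.factorial k) := by
        gcongr with σ _
        exact gSample_perm_le C hs σ
    _ = gMax k C := by
        rw [Finset.sum_const, nsmul_eq_mul]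
        rw [show ((Finset.univ : Finset (Equiv.Perm (Fin k))).card : ℝ) = (Nat.factorial k : ℝ) by
          rw [Finset.card_univ]; exact_mod_cast hcard]
        field_simp

lemma inSk_Cbar {k : ℕ} {C : Fin k → Matrix (Fin k) (Fin k) ℝ} (hC : inSk k C) :
    inSk k (Cbar C) := by
  have hk0 : (Nat.factorial k : ℝ) ≠ 0 := by positivity
  have hcard : ((Finset.univ : Finset (Equiv.Perm (Fin k))).card : ℝ) = (Nat.factorial k : ℝ) := by
    rw [Finset.card_univ, Fintype.card_perm, Fintype.card_fin]
  intro ℓ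
  refine ⟨?_, ?_, ?_⟩
  · intro i hi
    have : ∀ σ : Equiv.Perm (Fin k), ∑ j, C (σ⁻¹ ℓ) (σ⁻¹ i) (σ⁻¹ j) = 0 := by
      intro σ
      rw [Fintype.sum_equiv (σ⁻¹ : Equiv.Perm (Fin k)) _ (fun j => C (σ⁻¹ ℓ) (σ⁻¹ i) j)
        (fun j => rfl)]
      exact (hC (σ⁻¹ ℓ)).1 (σ⁻¹ i) (fun h => hi (σ⁻¹.injective h))
    unfold Cbar
    rw [← Finset.sum_div]
    rw [Finset.sum_comm]
    rw [Finset.sum_eq_zero (fun σ _ => this σ), zero_div]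
  · intro j hj
    have : ∀ σ : Equiv.Perm (Fin k), ∑ i, C (σ⁻¹ ℓ) (σ⁻¹ i) (σ⁻¹ j) = 0 := by
      intro σ
      rw [Fintype.sum_equiv (σ⁻¹ : Equiv.Perm (Fin k)) _ (fun i => C (σ⁻¹ ℓ) i (σ⁻¹ j))
        (fun i => rfl)]
      exact (hC (σ⁻¹ ℓ)).2.1 (σ⁻¹ j) (fun h => hj (σ⁻¹.injective h))
    unfold Cbar
    rw [← Finset.sum_div]
    rw [Finset.sum_comm]
    rw [Finset.sum_eq_zero (fun σ _ => this σ), zero_div]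
  · have : ∀ σ : Equiv.Perm (Fin k), ∑ i, ∑ j, C (σ⁻¹ ℓ) (σ⁻¹ i) (σ⁻¹ j) = 1 := by
      intro σ
      rw [Fintype.sum_equiv (σ⁻¹ : Equiv.Perm (Fin k)) _
        (fun i => ∑ j, C (σ⁻¹ ℓ) i (σ⁻¹ j)) (fun i => rfl)]
      calc ∑ i, ∑ j, C (σ⁻¹ ℓ) i (σ⁻¹ j)
          = ∑ i, ∑ j, C (σ⁻¹ ℓ) i j := by
            refine Finset.sum_congr rfl (fun i _ => ?_)
            exact Fintype.sum_equiv (σ⁻¹ : Equiv.Perm (Fin k)) _ _ (fun j => rfl)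
        _ = 1 := (hC (σ⁻¹ ℓ)).2.2
    unfold Cbar
    calc ∑ i, ∑ j, (∑ σ : Equiv.Perm (Fin k), C (σ⁻¹ ℓ) (σ⁻¹ i) (σ⁻¹ j)) / (Nat.factorial k)
        = (∑ σ : Equiv.Perm (Fin k), ∑ i, ∑ j, C (σ⁻¹ ℓ) (σ⁻¹ i) (σ⁻¹ j)) / (Nat.factorial k) := by
          simp only [← Finset.sum_div]
          congr 1
          calc ∑ i : Fin k, ∑ j : Fin k, ∑ σ : Equiv.Perm (Fin k), C (σ⁻¹ ℓ) (σ⁻¹ i) (σ⁻¹ j)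
              = ∑ i : Fin k, ∑ σ : Equiv.Perm (Fin k), ∑ j : Fin k, C (σ⁻¹ ℓ) (σ⁻¹ i) (σ⁻¹ j) :=
                Finset.sum_congr rfl (fun i _ => Finset.sum_comm)
            _ = ∑ σ : Equiv.Perm (Fin k), ∑ i : Fin k, ∑ j : Fin k, C (σ⁻¹ ℓ) (σ⁻¹ i) (σ⁻¹ j) :=
                Finset.sum_comm
        _ = 1 := by
          rw [Finset.sum_congr rfl (fun σ _ => this σ), Finset.sum_const, nsmul_eq_mul, hcard]
          field_simp

lemma Cbar_inv {k : ℕ} (C : Fin k → Matrix (Fin k) (Fin k) ℝ) (σ : Equiv.Perm (Fin k))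
    (ℓ i j : Fin k) : Cbar C (σ ℓ) (σ i) (σ j) = Cbar C ℓ i j := by
  unfold Cbar
  congr 1
  refine (Fintype.sum_equiv (Equiv.mulLeft σ) _ _ (fun ρ => ?_)).symm
  simp [Equiv.Perm.mul_apply, mul_inv_rev]

section perms
variable {α : Type*} [DecidableEq α]

lemma perm2 {p1 p2 q1 q2 : α} (hp : p1 ≠ p2) (hq : q1 ≠ q2) :
    ∃ σ : Equiv.Perm α, σ p1 = q1 ∧ σ p2 = q2 := by
  refine ⟨(Equiv.swap (Equiv.swap p1 q1 p2) q2) * (Equiv.swap p1 q1), ?_, ?_⟩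
  · simp only [Equiv.Perm.mul_apply, Equiv.swap_apply_left]
    refine Equiv.swap_apply_of_ne_of_ne (fun h => hp ?_) hq
    have := congrArg (Equiv.swap p1 q1) h.symm
    simpa using this.symm
  · simp only [Equiv.Perm.mul_apply, Equiv.swap_apply_left]

lemma perm3 {p1 p2 p3 q1 q2 q3 : α}
    (h12 : p1 ≠ p2) (h13 : p1 ≠ p3) (h23 : p2 ≠ p3)
    (g12 : q1 ≠ q2) (g13 : q1 ≠ q3) (g23 : q2 ≠ q3) :
    ∃ σ : Equiv.Perm α, σ p1 = q1 ∧ σ p2 = q2 ∧ σ p3 = q3 := by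
  obtain ⟨τ, h1, h2⟩ := perm2 h12 g12
  have hne1 : τ p3 ≠ q1 := fun h => h13 (τ.injective (h.trans h1.symm)).symm
  have hne2 : τ p3 ≠ q2 := fun h => h23 (τ.injective (h.trans h2.symm)).symm
  refine ⟨(Equiv.swap (τ p3) q3) * τ, ?_, ?_, ?_⟩
  · simp only [Equiv.Perm.mul_apply, h1]
    exact Equiv.swap_apply_of_ne_of_ne (Ne.symm hne1) g13
  · simp only [Equiv.Perm.mul_apply, h2]
    exact Equiv.swap_apply_of_ne_of_ne (Ne.symm hne2) g23
  · simp only [Equiv.Perm.mul_apply, Equiv.swap_apply_left]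
end perms


lemma lower_master (k : ℕ) (hk : 3 ≤ k) (C : Fin k → Matrix (Fin k) (Fin k) ℝ)
    (hC : inSk k C) :
    ∃ x y a b : ℝ, x + ((k:ℝ) - 1) * a = 1 ∧ a + y + ((k:ℝ) - 2) * b = 0 ∧
      ∀ s : Finset (Fin k × Fin k), IsSample s → gSample s (Cfix k x y a b) ≤ gMax k C := by
  set e0 : Fin k := ⟨0, by omega⟩ with he0
  set e1 : Fin k := ⟨1, by omega⟩ with he1
  set e2 : Fin k := ⟨2, by omega⟩ with he2
  have h01 : e0 ≠ e1 := by simp [he0, he1, Fin.ext_iff]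
  have h02 : e0 ≠ e2 := by simp [he0, he2, Fin.ext_iff]
  have h12 : e1 ≠ e2 := by simp [he1, he2, Fin.ext_iff]
  set D := Cbar C with hD
  set x := D e0 e0 e0 with hx
  set y := D e0 e1 e1 with hy
  set a := D e0 e0 e1 with ha
  set a2 := D e0 e1 e0 with ha2
  set b := D e0 e1 e2 with hb
  have class_x : ∀ ℓ, D ℓ ℓ ℓ = x := by
    intro ℓ
    have h := Cbar_inv C (Equiv.swap e0 ℓ) e0 e0 e0
    rwa [Equiv.swap_apply_left] at h
  have class_y : ∀ ℓ i, i ≠ ℓ → D ℓ i i = y := by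
    intro ℓ i hi
    obtain ⟨σ, hσ0, hσ1⟩ := perm2 h01 (Ne.symm hi)
    have h := Cbar_inv C σ e0 e1 e1
    rwa [hσ0, hσ1] at h
  have class_a : ∀ ℓ j, j ≠ ℓ → D ℓ ℓ j = a := by
    intro ℓ j hj
    obtain ⟨σ, hσ0, hσ1⟩ := perm2 h01 (Ne.symm hj)
    have h := Cbar_inv C σ e0 e0 e1
    rwa [hσ0, hσ1] at h
  have class_a2 : ∀ ℓ i, i ≠ ℓ → D ℓ i ℓ = a2 := by
    intro ℓ i hi
    obtain ⟨σ, hσ0, hσ1⟩ := perm2 h01 (Ne.symm hi)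
    have h := Cbar_inv C σ e0 e1 e0
    rwa [hσ0, hσ1] at h
  have class_b : ∀ ℓ i j, i ≠ ℓ → j ≠ ℓ → i ≠ j → D ℓ i j = b := by
    intro ℓ i j hi hj hij
    obtain ⟨σ, hσ0, hσ1, hσ2⟩ := perm3 h01 h02 h12 (Ne.symm hi) (Ne.symm hj) hij
    have h := Cbar_inv C σ e0 e1 e2
    rwa [hσ0, hσ1, hσ2] at h
  have hDk := inSk_Cbar hC
  have hcard : ((Finset.univ : Finset (Fin k)).card : ℝ) = (k : ℝ) := by
    rw [Finset.card_univ, Fintype.card_fin]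
  have schi : ∀ w : Fin k, ∑ j : Fin k, chi (j = w) = 1 := by
    intro w; simp [chi]
  -- row 0 of matrix e0 sums to 1
  have hrow0 : ∑ j, D e0 e0 j = 1 := by
    have htot := (hDk e0).2.2
    rwa [Finset.sum_eq_single e0 (fun i _ hi => (hDk e0).1 i hi)
      (fun h => absurd (Finset.mem_univ _) h)] at htot
  have hrel1 : x + ((k:ℝ) - 1) * a = 1 := by
    have hpt : ∀ j : Fin k, D e0 e0 j = a + (x - a) * chi (j = e0) := by
      intro j
      by_cases hj : j = e0
      · subst hj; simp [chi, class_x]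
      · simp [chi, hj, class_a e0 j hj]
    have h2 : ∑ j, D e0 e0 j = (k:ℝ) * a + (x - a) := by
      rw [Finset.sum_congr rfl (fun j _ => hpt j), Finset.sum_add_distrib,
        Finset.sum_const, ← Finset.mul_sum, schi, nsmul_eq_mul, hcard]
      ring
    rw [h2] at hrow0
    linarith
  have hrow1 : ∑ j, D e0 e1 j = 0 := (hDk e0).1 e1 h01.symm
  have hcol1 : ∑ i, D e0 i e1 = 0 := (hDk e0).2.1 e1 h01.symm
  have hrow1v : (k:ℝ) * b + (a2 - b) + (y - b) = 0 := by
    have hpt : ∀ j : Fin k, D e0 e1 j = b + (a2 - b) * chi (j = e0) + (y - b) * chi (j = e1) := by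
      intro j
      by_cases hj0 : j = e0
      · subst hj0; simp [chi, h01, h01.symm, class_a2 e0 e1 h01.symm]
      · by_cases hj1 : j = e1
        · subst hj1; simp [chi, hj0, class_y e0 e1 h01.symm]
        · simp [chi, hj0, hj1, class_b e0 e1 j h01.symm hj0 (fun h => hj1 h.symm)]
    have h2 : ∑ j, D e0 e1 j = (k:ℝ) * b + (a2 - b) + (y - b) := by
      rw [Finset.sum_congr rfl (fun j _ => hpt j)]
      rw [Finset.sum_add_distrib, Finset.sum_add_distrib, Finset.sum_const,
        ← Finset.mul_sum, ← Finset.mul_sum, schi, schi, nsmul_eq_mul, hcard]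
      ring
    rw [h2] at hrow1
    exact hrow1
  have hcol1v : (k:ℝ) * b + (a - b) + (y - b) = 0 := by
    have hpt : ∀ i : Fin k, D e0 i e1 = b + (a - b) * chi (i = e0) + (y - b) * chi (i = e1) := by
      intro i
      by_cases hi0 : i = e0
      · subst hi0; simp [chi, h01, h01.symm, class_a e0 e1 h01.symm]
      · by_cases hi1 : i = e1
        · subst hi1; simp [chi, hi0, class_y e0 e1 h01.symm]
        · simp [chi, hi0, hi1, class_b e0 i e1 hi0 h01.symm hi1]
    have h2 : ∑ i, D e0 i e1 = (k:ℝ) * b + (a - b) + (y - b) := by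
      rw [Finset.sum_congr rfl (fun i _ => hpt i)]
      rw [Finset.sum_add_distrib, Finset.sum_add_distrib, Finset.sum_const,
        ← Finset.mul_sum, ← Finset.mul_sum, schi, schi, nsmul_eq_mul, hcard]
      ring
    rw [h2] at hcol1
    exact hcol1
  have ha2a : a2 = a := by linarith
  have hrel2 : a + y + ((k:ℝ) - 2) * b = 0 := by linarith
  refine ⟨x, y, a, b, hrel1, hrel2, ?_⟩
  intro s hs
  have hfun : Cfix k x y a b = D := by
    funext ℓ i j
    show Cfix k x y a b ℓ i j = D ℓ i j
    unfold Cfix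
    by_cases h1 : i = ℓ ∧ j = ℓ
    · rw [if_pos h1, ← class_x ℓ, h1.1, h1.2]
    · rw [if_neg h1]
      by_cases h2 : i = j
      · rw [if_pos h2]
        have hil : i ≠ ℓ := fun h => h1 ⟨h, h2 ▸ h⟩
        rw [← class_y ℓ i hil, h2]
      · rw [if_neg h2]
        by_cases h3 : i = ℓ ∨ j = ℓ
        · rw [if_pos h3]
          rcases h3 with h3 | h3
          · have hjl : j ≠ ℓ := fun h => h1 ⟨h3, h⟩
            rw [← class_a ℓ j hjl, h3]
          · have hil : i ≠ ℓ := fun h => h1 ⟨h, h3⟩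
            rw [← ha2a, ← class_a2 ℓ i hil, h3]
        · push_neg at h3
          rw [if_neg (by tauto : ¬(i = ℓ ∨ j = ℓ))]
          exact (class_b ℓ i j h3.1 h3.2 h2).symm
  rw [hfun]
  exact gSample_Cbar_le C hs

lemma chi_mul (P Q : Prop) [Decidable P] [Decidable Q] :
    chi P * chi Q = chi (P ∧ Q) := by
  unfold chi
  by_cases hP : P <;> by_cases hQ : Q <;> simp [hP, hQ]

lemma sum_chi {α : Type*} (s : Finset α) (P : α → Prop) [DecidablePred P] :
    ∑ p ∈ s, chi (P p) = ((s.filter P).card : ℝ) := by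
  simp [chi, Finset.sum_boole]

lemma gPart_Cfix {k : ℕ} (x y a b : ℝ) (s : Finset (Fin k × Fin k)) (ℓ : Fin k) :
    gPart s (Cfix k x y a b) ℓ
      = b * s.card + (y - b) * ((s.filter (fun p => p.1 = p.2)).card : ℝ)
        + (a - b) * (((s.filter (fun p => p.1 = ℓ)).card : ℝ)
            + ((s.filter (fun p => p.2 = ℓ)).card : ℝ))
        + (x - y - 2*a + 2*b) * ((s.filter (fun p => p.1 = ℓ ∧ p.2 = ℓ)).card : ℝ) := by
  unfold gPart
  rw [Finset.sum_congr rfl (fun p _ => Cfix_eq k x y a b ℓ p.1 p.2)]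
  rw [Finset.sum_add_distrib, Finset.sum_add_distrib, Finset.sum_add_distrib]
  rw [Finset.sum_congr rfl (fun p _ => congrArg (fun t => (x - y - 2*a + 2*b) * t)
      (chi_mul (p.1 = ℓ) (p.2 = ℓ)))]
  rw [← Finset.mul_sum, ← Finset.mul_sum, ← Finset.mul_sum, Finset.sum_add_distrib,
    Finset.sum_const, sum_chi, sum_chi, sum_chi, sum_chi, nsmul_eq_mul]
  ring

lemma upper10 {s : Finset (Fin 10 × Fin 10)} (hs : IsSample s) :
    gSample s (Cfix 10 (19/100) (-1/100) (9/100) (-1/100)) ≤ 28/25 := by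
  classical
  set n := s.card with hn
  set m : Fin 10 → ℕ := fun ℓ =>
    (s.filter fun p => p.1 = ℓ).card + (s.filter fun p => p.2 = ℓ).card with hm
  have hgp : ∀ ℓ, gPart s (Cfix 10 (19/100) (-1/100) (9/100) (-1/100)) ℓ
      = (m ℓ : ℝ)/10 - (n : ℝ)/100 := by
    intro ℓ
    rw [gPart_Cfix]
    simp only [hm]
    push_cast
    ring
  have hmsum : ∑ ℓ : Fin 10, m ℓ = 2 * n := by
    simp only [hm]
    rw [Finset.sum_add_distrib,
        ← Finset.card_eq_sum_card_fiberwise (f := Prod.fst) (fun x _ => Finset.mem_univ _),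
        ← Finset.card_eq_sum_card_fiberwise (f := Prod.snd) (fun x _ => Finset.mem_univ _)]
    omega
  have hinj : Set.InjOn Prod.snd (s : Set (Fin 10 × Fin 10)) := by
    intro p hp q hq h
    by_contra hne
    exact hs.2 p hp q hq hne h
  have himg : (s.image Prod.snd).card = n := Finset.card_image_of_injOn hinj
  set Z := (Finset.univ : Finset (Fin 10)).filter (fun ℓ => m ℓ = 0) with hZ
  have hsub : s.image Prod.snd ⊆ Finset.univ \ Z := by
    intro ℓ hl
    obtain ⟨p, hp, rfl⟩ := Finset.mem_image.1 hl
    have : p ∈ s.filter (fun q => q.2 = p.2) := Finset.mem_filter.2 ⟨hp, rfl⟩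
    have hpos : 0 < (s.filter fun q => q.2 = p.2).card := Finset.card_pos.2 ⟨p, this⟩
    simp only [hZ, Finset.mem_sdiff, Finset.mem_univ, Finset.mem_filter, true_and]
    simp only [hm]
    omega
  have hqn : Z.card + n ≤ 10 := by
    have h1 := Finset.card_le_card hsub
    have h2 : (Finset.univ \ Z).card = 10 - Z.card := by
      rw [Finset.card_sdiff_of_subset (Finset.filter_subset _ _)]
      simp [hZ]
    have h3 : Z.card ≤ 10 := by
      simpa using Finset.card_le_card (Finset.filter_subset (fun ℓ => m ℓ = 0) Finset.univ)
    omega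
  have h1n : 1 ≤ n := hs.1.card_pos
  have hn10 : n ≤ 10 := by
    have := Finset.card_le_card (Finset.subset_univ (s.image Prod.snd))
    simp only [Finset.card_univ, Fintype.card_fin] at this
    omega
  -- split the sum
  have hsplit := Finset.sum_filter_add_sum_filter_not (Finset.univ : Finset (Fin 10))
    (fun ℓ => m ℓ = 0) (fun ℓ => |gPart s (Cfix 10 (19/100) (-1/100) (9/100) (-1/100)) ℓ|)
  have hcards : Z.card + ((Finset.univ : Finset (Fin 10)).filter (fun ℓ => ¬(m ℓ = 0))).card = 10 := by
    rw [hZ, Finset.card_filter_add_card_filter_not]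
    simp
  have hZsum : ∑ ℓ ∈ Z, |gPart s (Cfix 10 (19/100) (-1/100) (9/100) (-1/100)) ℓ|
      = (Z.card : ℝ) * ((n:ℝ)/100) := by
    rw [Finset.sum_congr rfl (fun ℓ hl => show
        |gPart s (Cfix 10 (19/100) (-1/100) (9/100) (-1/100)) ℓ| = (n:ℝ)/100 from ?_),
      Finset.sum_const, nsmul_eq_mul]
    have hml : m ℓ = 0 := (Finset.mem_filter.1 hl).2
    rw [hgp ℓ, hml]
    rw [Nat.cast_zero, zero_div, zero_sub, abs_neg, abs_of_nonneg (by positivity)]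
  set W := (Finset.univ : Finset (Fin 10)).filter (fun ℓ => ¬(m ℓ = 0)) with hW
  have hWm : ∑ ℓ ∈ W, m ℓ = 2 * n := by
    have h0 : ∑ ℓ ∈ Z, m ℓ = 0 := by
      apply Finset.sum_eq_zero
      intro ℓ hl
      exact (Finset.mem_filter.1 hl).2
    have := Finset.sum_filter_add_sum_filter_not (Finset.univ : Finset (Fin 10))
      (fun ℓ => m ℓ = 0) m
    rw [← hZ, ← hW] at this
    omega
  have hWsum : ∑ ℓ ∈ W, |gPart s (Cfix 10 (19/100) (-1/100) (9/100) (-1/100)) ℓ|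
      = (2*n : ℝ)/10 - (W.card : ℝ) * ((n:ℝ)/100) := by
    have hptw : ∀ ℓ ∈ W, |gPart s (Cfix 10 (19/100) (-1/100) (9/100) (-1/100)) ℓ|
        = (m ℓ : ℝ)/10 - (n:ℝ)/100 := by
      intro ℓ hl
      have hml : 1 ≤ m ℓ := by
        have := (Finset.mem_filter.1 hl).2
        omega
      rw [hgp ℓ, abs_of_nonneg]
      have : (1:ℝ) ≤ (m ℓ : ℝ) := by exact_mod_cast hml
      have hn' : (n:ℝ) ≤ 10 := by exact_mod_cast hn10
      linarith
    rw [Finset.sum_congr rfl hptw, Finset.sum_sub_distrib, Finset.sum_const, nsmul_eq_mul,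
      ← Finset.sum_div]
    congr 2
    rw [← Nat.cast_sum, hWm]
    push_cast
    ring
  have hnat : 10 * n + 2 * Z.card * n ≤ 112 := by
    have hq : Z.card ≤ 10 - n := by omega
    interval_cases n <;> omega
  have hfin : (10 * n + 2 * Z.card * n : ℝ) ≤ 112 := by exact_mod_cast hnat
  unfold gSample
  rw [← hsplit]
  rw [hZsum, hWsum]
  have hWcard : ((W.card : ℕ) : ℝ) = 10 - (Z.card : ℝ) := by
    have : ((Z.card : ℕ) : ℝ) + W.card = 10 := by exact_mod_cast hcards
    linarith
  rw [hWcard]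
  nlinarith [hfin]


lemma natA : ∀ N D Q : ℤ, 1 ≤ N → N ≤ 8 → 0 ≤ D → D ≤ N → 0 ≤ Q → Q + N ≤ 9 →
    92*N + 2*Q*(D + 10*N) ≤ 924 + 4*D := by
  intro N D Q h1 h2 h3 h4 h5 h6
  have h7 : Q ≤ 8 := by omega
  interval_cases N <;> interval_cases Q <;> omega

lemma natB : ∀ T D : ℤ, 0 ≤ T → T ≤ 9 → 1 ≤ D → D + T ≤ 9 →
    T*(D-1) + 91*(18-T) + 5*D ≤ 924 + (9-T)*(D+90) := by
  intro T D h1 h2 h3 h4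
  interval_cases T <;> omega

set_option maxHeartbeats 2000000 in
lemma upper9 {s : Finset (Fin 9 × Fin 9)} (hs : IsSample s) :
    gSample s (Cfix 9 (176/824) (-11/824) (81/824) (-10/824)) ≤ 231/206 := by
  classical
  set C9 := Cfix 9 (176/824) (-11/824) (81/824) (-10/824) with hC9
  set n := s.card with hn
  set m : Fin 9 → ℕ := fun ℓ =>
    (s.filter fun p => p.1 = ℓ).card + (s.filter fun p => p.2 = ℓ).card with hm
  set e : Fin 9 → ℕ := fun ℓ => (s.filter fun p => p.1 = ℓ ∧ p.2 = ℓ).card with he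
  set d := (s.filter fun p => p.1 = p.2).card with hd
  have hgp : ∀ ℓ, gPart s C9 ℓ
      = (91*(m ℓ : ℝ) + 5*(e ℓ : ℝ) - (d:ℝ) - 10*(n:ℝ))/824 := by
    intro ℓ
    rw [hC9, gPart_Cfix]
    simp only [hm, he, hd, hn]
    push_cast
    ring
  have hmsum : ∑ ℓ : Fin 9, m ℓ = 2 * n := by
    simp only [hm]
    rw [Finset.sum_add_distrib,
        ← Finset.card_eq_sum_card_fiberwise (f := Prod.fst) (fun x _ => Finset.mem_univ _),
        ← Finset.card_eq_sum_card_fiberwise (f := Prod.snd) (fun x _ => Finset.mem_univ _)]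
    omega
  have hesum : ∑ ℓ : Fin 9, e ℓ = d := by
    rw [hd, Finset.card_eq_sum_card_fiberwise (f := Prod.fst) (t := Finset.univ)
      (fun x _ => Finset.mem_univ _)]
    refine Finset.sum_congr rfl (fun ℓ _ => ?_)
    show (s.filter fun p => p.1 = ℓ ∧ p.2 = ℓ).card = _
    rw [Finset.filter_filter]
    congr 1
    refine Finset.filter_congr (fun p _ => ?_)
    constructor
    · rintro ⟨h1, h2⟩; exact ⟨h1.trans h2.symm, h1⟩
    · rintro ⟨h1, h2⟩; exact ⟨h2, h1.symm.trans h2⟩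
  have hec : ∀ ℓ, e ℓ ≤ (s.filter fun p => p.2 = ℓ).card := by
    intro ℓ
    apply Finset.card_le_card
    intro p hp
    rw [Finset.mem_filter] at hp ⊢
    exact ⟨hp.1, hp.2.2⟩
  have her : ∀ ℓ, e ℓ ≤ (s.filter fun p => p.1 = ℓ).card := by
    intro ℓ
    apply Finset.card_le_card
    intro p hp
    rw [Finset.mem_filter] at hp ⊢
    exact ⟨hp.1, hp.2.1⟩
  have he1 : ∀ ℓ, e ℓ ≤ 1 := by
    intro ℓ
    refine le_trans (hec ℓ) ?_
    rw [Finset.card_le_one]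
    intro p hp q hq
    by_contra hne
    have hp' := Finset.mem_filter.1 hp
    have hq' := Finset.mem_filter.1 hq
    exact hs.2 p hp'.1 q hq'.1 hne (hp'.2.trans hq'.2.symm)
  have hemz : ∀ ℓ, m ℓ = 0 → e ℓ = 0 := by
    intro ℓ hml
    have := hec ℓ
    simp only [hm] at hml
    omega
  have hem : ∀ ℓ, m ℓ = 1 → e ℓ = 0 := by
    intro ℓ hml
    have h1 := hec ℓ
    have h2 := her ℓ
    simp only [hm] at hml
    omega
  have hinj : Set.InjOn Prod.snd (s : Set (Fin 9 × Fin 9)) := by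
    intro p hp q hq h
    by_contra hne
    exact hs.2 p hp q hq hne h
  have himg : (s.image Prod.snd).card = n := Finset.card_image_of_injOn hinj
  have hdn : d ≤ n := Finset.card_filter_le _ _
  have h1n : 1 ≤ n := hs.1.card_pos
  have hn9 : n ≤ 9 := by
    have h := Finset.card_le_card (Finset.subset_univ (s.image Prod.snd))
    simp only [Finset.card_univ, Fintype.card_fin] at h
    omega
  set Z := (Finset.univ : Finset (Fin 9)).filter (fun ℓ => m ℓ = 0) with hZ
  have hsub : s.image Prod.snd ⊆ Finset.univ \ Z := by
    intro ℓ hl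
    obtain ⟨p, hp, rfl⟩ := Finset.mem_image.1 hl
    have hmem : p ∈ s.filter (fun q => q.2 = p.2) := Finset.mem_filter.2 ⟨hp, rfl⟩
    have hpos : 0 < (s.filter fun q => q.2 = p.2).card := Finset.card_pos.2 ⟨p, hmem⟩
    simp only [hZ, Finset.mem_sdiff, Finset.mem_univ, Finset.mem_filter, true_and]
    simp only [hm]
    omega
  have hqn : Z.card + n ≤ 9 := by
    have h1 := Finset.card_le_card hsub
    have h2 : (Finset.univ \ Z).card = 9 - Z.card := by
      rw [Finset.card_sdiff_of_subset (Finset.filter_subset _ _)]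
      simp [hZ]
    have h3 : Z.card ≤ 9 := by
      simpa using Finset.card_le_card (Finset.filter_subset (fun ℓ => m ℓ = 0) Finset.univ)
    omega
  rcases Nat.lt_or_ge n 9 with hn8 | hn9'
  · -- case n ≤ 8
    have hn8' : n ≤ 8 := by omega
    set W := (Finset.univ : Finset (Fin 9)).filter (fun ℓ => ¬(m ℓ = 0)) with hW
    have hsplit := Finset.sum_filter_add_sum_filter_not (Finset.univ : Finset (Fin 9))
      (fun ℓ => m ℓ = 0) (fun ℓ => |gPart s C9 ℓ|)
    have hcards : Z.card + W.card = 9 := by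
      rw [hZ, hW, Finset.card_filter_add_card_filter_not]
      simp
    have hZsum : ∑ ℓ ∈ Z, |gPart s C9 ℓ| = (Z.card : ℝ) * (((d:ℝ) + 10*(n:ℝ))/824) := by
      rw [Finset.sum_congr rfl (fun ℓ hl => show |gPart s C9 ℓ| = ((d:ℝ) + 10*(n:ℝ))/824 from ?_),
        Finset.sum_const, nsmul_eq_mul]
      have hml : m ℓ = 0 := (Finset.mem_filter.1 hl).2
      have hel : e ℓ = 0 := hemz ℓ hml
      rw [hgp ℓ, hml, hel]
      rw [show (91*((0:ℕ):ℝ) + 5*((0:ℕ):ℝ) - (d:ℝ) - 10*(n:ℝ))/824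
          = -((((d:ℝ) + 10*(n:ℝ)))/824) by push_cast; ring, abs_neg, abs_of_nonneg (by positivity)]
    have hWm : ∑ ℓ ∈ W, m ℓ = 2 * n := by
      have h0 : ∑ ℓ ∈ Z, m ℓ = 0 :=
        Finset.sum_eq_zero (fun ℓ hl => (Finset.mem_filter.1 hl).2)
      have h1 := Finset.sum_filter_add_sum_filter_not (Finset.univ : Finset (Fin 9))
        (fun ℓ => m ℓ = 0) m
      rw [← hZ, ← hW] at h1
      omega
    have hWe : ∑ ℓ ∈ W, e ℓ = d := by
      have h0 : ∑ ℓ ∈ Z, e ℓ = 0 :=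
        Finset.sum_eq_zero (fun ℓ hl => hemz ℓ (Finset.mem_filter.1 hl).2)
      have h1 := Finset.sum_filter_add_sum_filter_not (Finset.univ : Finset (Fin 9))
        (fun ℓ => m ℓ = 0) e
      rw [← hZ, ← hW] at h1
      omega
    have hWsum : ∑ ℓ ∈ W, |gPart s C9 ℓ|
        = (91*(2*(n:ℝ)) + 5*(d:ℝ) - (W.card : ℝ) * ((d:ℝ) + 10*(n:ℝ)))/824 := by
      have hptw : ∀ ℓ ∈ W, |gPart s C9 ℓ|
          = (91*(m ℓ : ℝ) + 5*(e ℓ : ℝ) - (d:ℝ) - 10*(n:ℝ))/824 := by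
        intro ℓ hl
        have hml : 1 ≤ m ℓ := by
          have := (Finset.mem_filter.1 hl).2
          omega
        rw [hgp ℓ, abs_of_nonneg]
        have hm1 : (1:ℝ) ≤ (m ℓ : ℝ) := by exact_mod_cast hml
        have hd8 : (d:ℝ) ≤ 8 := by exact_mod_cast le_trans hdn hn8'
        have hn8r : (n:ℝ) ≤ 8 := by exact_mod_cast hn8'
        have he0 : (0:ℝ) ≤ (e ℓ : ℝ) := by positivity
        apply div_nonneg _ (by norm_num)
        linarith
      rw [Finset.sum_congr rfl hptw, ← Finset.sum_div]
      congr 1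
      rw [Finset.sum_sub_distrib, Finset.sum_sub_distrib, Finset.sum_add_distrib,
        ← Finset.mul_sum, ← Finset.mul_sum, Finset.sum_const, Finset.sum_const,
        ← Nat.cast_sum, ← Nat.cast_sum, hWm, hWe, nsmul_eq_mul, nsmul_eq_mul]
      push_cast
      ring
    have hfin : 92*(n:ℝ) + 2*(Z.card:ℝ)*((d:ℝ) + 10*(n:ℝ)) ≤ 924 + 4*(d:ℝ) := by
      have := natA (n:ℤ) (d:ℤ) (Z.card:ℤ) (by exact_mod_cast h1n) (by exact_mod_cast hn8')
        (by positivity) (by exact_mod_cast hdn) (by positivity) (by exact_mod_cast hqn)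
      exact_mod_cast this
    unfold gSample
    rw [← hsplit, ← hZ, ← hW, hZsum, hWsum]
    have hWcard : ((W.card : ℕ) : ℝ) = 9 - (Z.card : ℝ) := by
      have : ((Z.card : ℕ) : ℝ) + W.card = 9 := by exact_mod_cast hcards
      linarith
    rw [hWcard]
    rw [show (231:ℝ)/206 = 924/824 by norm_num]
    nlinarith [hfin]
  · -- case n = 9
    have hn9e : n = 9 := by omega
    have hn9r : (n:ℝ) = 9 := by rw [hn9e]; norm_num
    have hZ0 : Z.card = 0 := by omega
    have hallm : ∀ ℓ, 1 ≤ m ℓ := by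
      intro ℓ
      by_contra h
      have hmem : ℓ ∈ Z := Finset.mem_filter.2 ⟨Finset.mem_univ _, by omega⟩
      have := Finset.card_pos.2 ⟨ℓ, hmem⟩
      omega
    set T := (Finset.univ : Finset (Fin 9)).filter (fun ℓ => m ℓ = 1) with hT
    set W := (Finset.univ : Finset (Fin 9)).filter (fun ℓ => ¬(m ℓ = 1)) with hW
    have hsplit := Finset.sum_filter_add_sum_filter_not (Finset.univ : Finset (Fin 9))
      (fun ℓ => m ℓ = 1) (fun ℓ => |gPart s C9 ℓ|)
    have hcards : T.card + W.card = 9 := by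
      rw [hT, hW, Finset.card_filter_add_card_filter_not]
      simp
    have hTsum : ∑ ℓ ∈ T, |gPart s C9 ℓ| = (T.card : ℝ) * (|1 - (d:ℝ)|/824) := by
      rw [Finset.sum_congr rfl (fun ℓ hl => show |gPart s C9 ℓ| = |1 - (d:ℝ)|/824 from ?_),
        Finset.sum_const, nsmul_eq_mul]
      have hml : m ℓ = 1 := (Finset.mem_filter.1 hl).2
      have hel : e ℓ = 0 := hem ℓ hml
      rw [hgp ℓ, hml, hel, hn9r]
      rw [show (91*((1:ℕ):ℝ) + 5*((0:ℕ):ℝ) - (d:ℝ) - 10*(9:ℝ))/824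
          = (1 - (d:ℝ))/824 by push_cast; ring]
      rw [abs_div, abs_of_pos (by norm_num : (0:ℝ) < 824)]
    have hTm : ∑ ℓ ∈ T, m ℓ = T.card := by
      rw [Finset.sum_congr rfl (fun ℓ hl => (Finset.mem_filter.1 hl).2), Finset.sum_const,
        smul_eq_mul, mul_one]
    have hWm : T.card + ∑ ℓ ∈ W, m ℓ = 18 := by
      have h1 := Finset.sum_filter_add_sum_filter_not (Finset.univ : Finset (Fin 9))
        (fun ℓ => m ℓ = 1) m
      rw [← hT, ← hW] at h1
      omega
    have hWe : ∑ ℓ ∈ W, e ℓ = d := by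
      have h0 : ∑ ℓ ∈ T, e ℓ = 0 :=
        Finset.sum_eq_zero (fun ℓ hl => hem ℓ (Finset.mem_filter.1 hl).2)
      have h1 := Finset.sum_filter_add_sum_filter_not (Finset.univ : Finset (Fin 9))
        (fun ℓ => m ℓ = 1) e
      rw [← hT, ← hW] at h1
      omega
    have hdT : d + T.card ≤ 9 := by
      have hle : ∑ ℓ ∈ W, e ℓ ≤ ∑ ℓ ∈ W, 1 := Finset.sum_le_sum (fun ℓ _ => he1 ℓ)
      simp only [Finset.sum_const, smul_eq_mul, mul_one] at hle
      omega
    have hWsum : ∑ ℓ ∈ W, |gPart s C9 ℓ|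
        = (91*(18 - (T.card:ℝ)) + 5*(d:ℝ) - (W.card : ℝ) * ((d:ℝ) + 90))/824 := by
      have hptw : ∀ ℓ ∈ W, |gPart s C9 ℓ|
          = (91*(m ℓ : ℝ) + 5*(e ℓ : ℝ) - (d:ℝ) - 90)/824 := by
        intro ℓ hl
        have hml : 2 ≤ m ℓ := by
          have h2 := (Finset.mem_filter.1 hl).2
          have h3 := hallm ℓ
          omega
        rw [hgp ℓ, hn9r, show 10*(9:ℝ) = 90 by norm_num, abs_of_nonneg]
        have hm2 : (2:ℝ) ≤ (m ℓ : ℝ) := by exact_mod_cast hml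
        have hd9 : (d:ℝ) ≤ 9 := by exact_mod_cast le_trans hdn hn9
        have he0 : (0:ℝ) ≤ (e ℓ : ℝ) := by positivity
        apply div_nonneg _ (by norm_num)
        linarith
      rw [Finset.sum_congr rfl hptw, ← Finset.sum_div]
      congr 1
      rw [Finset.sum_sub_distrib, Finset.sum_sub_distrib, Finset.sum_add_distrib,
        ← Finset.mul_sum, ← Finset.mul_sum, Finset.sum_const, Finset.sum_const,
        ← Nat.cast_sum, ← Nat.cast_sum, hWe, nsmul_eq_mul, nsmul_eq_mul]
      have hms : ((∑ ℓ ∈ W, m ℓ : ℕ) : ℝ) = 18 - (T.card:ℝ) := by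
        have h2 : ((T.card : ℕ):ℝ) + ((∑ ℓ ∈ W, m ℓ : ℕ):ℝ) = 18 := by exact_mod_cast hWm
        linarith
      rw [hms]
      ring
    unfold gSample
    rw [← hsplit, ← hT, ← hW, hTsum, hWsum]
    have hWcard : ((W.card : ℕ) : ℝ) = 9 - (T.card : ℝ) := by
      have : ((T.card : ℕ) : ℝ) + W.card = 9 := by exact_mod_cast hcards
      linarith
    rw [hWcard]
    rw [show (231:ℝ)/206 = 924/824 by norm_num]
    rcases Nat.eq_zero_or_pos d with hd0 | hd1
    · rw [hd0]
      rw [show |1 - ((0:ℕ):ℝ)| = 1 by norm_num]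
      push_cast
      have hT9 : (T.card : ℝ) ≤ 9 := by exact_mod_cast (by omega : T.card ≤ 9)
      have hT0 : (0:ℝ) ≤ (T.card : ℝ) := by positivity
      nlinarith
    · have habs : |1 - (d:ℝ)| = (d:ℝ) - 1 := by
        rw [abs_of_nonpos]
        · ring
        · have : (1:ℝ) ≤ (d:ℝ) := by exact_mod_cast hd1
          linarith
      rw [habs]
      have hfin : (T.card:ℝ) * ((d:ℝ) - 1) + 91*(18 - (T.card:ℝ)) + 5*(d:ℝ)
          ≤ 924 + (9 - (T.card:ℝ))*((d:ℝ) + 90) := by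
        have := natB (T.card:ℤ) (d:ℤ) (by positivity) (by exact_mod_cast (by omega : T.card ≤ 9))
          (by exact_mod_cast hd1) (by exact_mod_cast (by omega : d + T.card ≤ 9))
        exact_mod_cast this
      nlinarith [hfin]

set_option maxRecDepth 4000
section samples

def s7c : Finset (Fin 9 × Fin 9) := {(0,1),(1,2),(2,3),(3,4),(4,5),(5,6),(6,0)}
def sd6 : Finset (Fin 9 × Fin 9) := {(0,0),(1,1),(2,2),(3,3),(4,4),(5,5)}
def sd7 : Finset (Fin 9 × Fin 9) := {(0,0),(1,1),(2,2),(3,3),(4,4),(5,5),(6,6)}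
def sd7' : Finset (Fin 10 × Fin 10) := {(0,0),(1,1),(2,2),(3,3),(4,4),(5,5),(6,6)}
def s8c : Finset (Fin 10 × Fin 10) := {(0,1),(1,2),(2,3),(3,4),(4,5),(5,6),(6,7),(7,0)}

lemma hs7c : IsSample s7c := ⟨⟨(0,1), by decide⟩, by decide⟩
lemma hsd6 : IsSample sd6 := ⟨⟨(0,0), by decide⟩, by decide⟩
lemma hsd7 : IsSample sd7 := ⟨⟨(0,0), by decide⟩, by decide⟩
lemma hsd7' : IsSample sd7' := ⟨⟨(0,0), by decide⟩, by decide⟩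
lemma hs8c : IsSample s8c := ⟨⟨(0,1), by decide⟩, by decide⟩

set_option maxHeartbeats 1000000 in
lemma gS_s7c (x y a b : ℝ) : gSample s7c (Cfix 9 x y a b) = 7*|2*a+5*b| + 2*|7*b| := by
  rw [gSample, show (univ : Finset (Fin 9)) = ({0,1,2,3,4,5,6,7,8} : Finset (Fin 9)) by decide]
  simp (config := { decide := true }) only [Finset.sum_insert, Finset.mem_insert,
    Finset.mem_singleton, Finset.sum_singleton, gPart, s7c, Cfix]
  ring_nf
  simp only [if_true, if_false, ite_true, ite_false]

set_option maxHeartbeats 1000000 in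
lemma gS_sd6 (x y a b : ℝ) : gSample sd6 (Cfix 9 x y a b) = 6*|x+5*y| + 3*|6*y| := by
  rw [gSample, show (univ : Finset (Fin 9)) = ({0,1,2,3,4,5,6,7,8} : Finset (Fin 9)) by decide]
  simp (config := { decide := true }) only [Finset.sum_insert, Finset.mem_insert,
    Finset.mem_singleton, Finset.sum_singleton, gPart, sd6, Cfix]
  ring_nf
  simp only [if_true, if_false, ite_true, ite_false]

set_option maxHeartbeats 1000000 in
lemma gS_sd7 (x y a b : ℝ) : gSample sd7 (Cfix 9 x y a b) = 7*|x+6*y| + 2*|7*y| := by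
  rw [gSample, show (univ : Finset (Fin 9)) = ({0,1,2,3,4,5,6,7,8} : Finset (Fin 9)) by decide]
  simp (config := { decide := true }) only [Finset.sum_insert, Finset.mem_insert,
    Finset.mem_singleton, Finset.sum_singleton, gPart, sd7, Cfix]
  ring_nf
  simp only [if_true, if_false, ite_true, ite_false]

set_option maxHeartbeats 1000000 in
lemma gS_sd7' (x y a b : ℝ) : gSample sd7' (Cfix 10 x y a b) = 7*|x+6*y| + 3*|7*y| := by
  rw [gSample, show (univ : Finset (Fin 10)) = ({0,1,2,3,4,5,6,7,8,9} : Finset (Fin 10)) by decide]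
  simp (config := { decide := true }) only [Finset.sum_insert, Finset.mem_insert,
    Finset.mem_singleton, Finset.sum_singleton, gPart, sd7', Cfix]
  ring_nf
  simp only [if_true, if_false, ite_true, ite_false]

set_option maxHeartbeats 1000000 in
lemma gS_s8c (x y a b : ℝ) : gSample s8c (Cfix 10 x y a b) = 8*|2*a+6*b| + 2*|8*b| := by
  rw [gSample, show (univ : Finset (Fin 10)) = ({0,1,2,3,4,5,6,7,8,9} : Finset (Fin 10)) by decide]
  simp (config := { decide := true }) only [Finset.sum_insert, Finset.mem_insert,
    Finset.mem_singleton, Finset.sum_singleton, gPart, s8c, Cfix]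
  ring_nf
  simp only [if_true, if_false, ite_true, ite_false]

end samples

section insk

lemma rowSum (k : ℕ) (x y a b : ℝ) (ℓ i : Fin k) :
    ∑ j, Cfix k x y a b ℓ i j
      = if i = ℓ then x + ((k:ℝ)-1)*a else a + y + ((k:ℝ)-2)*b := by
  have hcard : ((Finset.univ : Finset (Fin k)).card : ℝ) = (k:ℝ) := by simp
  have hchi1 : ∑ j : Fin k, chi (i = j) = 1 := by simp [chi]
  have hchi2 : ∑ j : Fin k, chi (j = ℓ) = 1 := by simp [chi]
  rw [Finset.sum_congr rfl (fun j _ => Cfix_eq k x y a b ℓ i j)]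
  rw [Finset.sum_add_distrib, Finset.sum_add_distrib, Finset.sum_add_distrib,
    ← Finset.mul_sum, ← Finset.mul_sum, ← Finset.mul_sum, ← Finset.mul_sum,
    Finset.sum_add_distrib, Finset.sum_const, Finset.sum_const, nsmul_eq_mul, nsmul_eq_mul,
    hcard, hchi1, hchi2]
  by_cases h : i = ℓ <;> simp [chi, h] <;> ring

lemma colSum (k : ℕ) (x y a b : ℝ) (ℓ j : Fin k) :
    ∑ i, Cfix k x y a b ℓ i j
      = if j = ℓ then x + ((k:ℝ)-1)*a else a + y + ((k:ℝ)-2)*b := by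
  have hcard : ((Finset.univ : Finset (Fin k)).card : ℝ) = (k:ℝ) := by simp
  have hchi1 : ∑ i : Fin k, chi (i = j) = 1 := by simp [chi]
  have hchi2 : ∑ i : Fin k, chi (i = ℓ) = 1 := by simp [chi]
  rw [Finset.sum_congr rfl (fun i _ => Cfix_eq k x y a b ℓ i j)]
  rw [Finset.sum_add_distrib, Finset.sum_add_distrib, Finset.sum_add_distrib,
    ← Finset.mul_sum, ← Finset.mul_sum, ← Finset.mul_sum,
    Finset.sum_add_distrib, Finset.sum_const, Finset.sum_const, nsmul_eq_mul, nsmul_eq_mul,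
    hcard, hchi1, hchi2]
  by_cases h : j = ℓ <;> simp [chi, h] <;> ring

lemma inSk_Cfix (k : ℕ) (x y a b : ℝ) (h1 : x + ((k:ℝ)-1)*a = 1)
    (h2 : a + y + ((k:ℝ)-2)*b = 0) : inSk k (Cfix k x y a b) := by
  intro ℓ
  refine ⟨?_, ?_, ?_⟩
  · intro i hi
    rw [rowSum, if_neg hi, h2]
  · intro j hj
    rw [colSum, if_neg hj, h2]
  · rw [Finset.sum_congr rfl (fun i _ => rowSum k x y a b ℓ i), Finset.sum_congr rfl
      (fun i _ => by rw [h1, h2])]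
    simp

end insk


-- final assembly
lemma inSk_C9 : inSk 9 (Cfix 9 (176/824) (-11/824) (81/824) (-10/824)) :=
  inSk_Cfix 9 _ _ _ _ (by norm_num) (by norm_num)

lemma inSk_C10 : inSk 10 (Cfix 10 (19/100) (-1/100) (9/100) (-1/100)) :=
  inSk_Cfix 10 _ _ _ _ (by norm_num) (by norm_num)

instance : Nonempty {s : Finset (Fin 9 × Fin 9) // IsSample s} := ⟨⟨s7c, hs7c⟩⟩
instance : Nonempty {s : Finset (Fin 10 × Fin 10) // IsSample s} := ⟨⟨s8c, hs8c⟩⟩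

lemma gMax9 : gMax 9 (Cfix 9 (176/824) (-11/824) (81/824) (-10/824)) = 231/206 := by
  apply le_antisymm
  · exact ciSup_le (fun t => upper9 t.2)
  · have h := gSample_le_gMax hs7c (Cfix 9 (176/824) (-11/824) (81/824) (-10/824))
    rw [gS_s7c] at h
    have e1 : |2*(81/824:ℝ)+5*(-10/824)| = 112/824 := by
      rw [abs_of_nonneg (by norm_num)]; norm_num
    have e2 : |7*(-10/824:ℝ)| = 70/824 := by
      rw [abs_of_nonpos (by norm_num)]; norm_num
    rw [e1, e2] at h
    linarith

lemma gMax10 : gMax 10 (Cfix 10 (19/100) (-1/100) (9/100) (-1/100)) = 28/25 := by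
  apply le_antisymm
  · exact ciSup_le (fun t => upper10 t.2)
  · have h := gSample_le_gMax hs8c (Cfix 10 (19/100) (-1/100) (9/100) (-1/100))
    rw [gS_s8c] at h
    have e1 : |2*(9/100:ℝ)+6*(-1/100)| = 12/100 := by
      rw [abs_of_nonneg (by norm_num)]; norm_num
    have e2 : |8*(-1/100:ℝ)| = 8/100 := by
      rw [abs_of_nonpos (by norm_num)]; norm_num
    rw [e1, e2] at h
    linarith

lemma lower9 (C : Fin 9 → Matrix (Fin 9) (Fin 9) ℝ) (hC : inSk 9 C) :
    (231/206:ℝ) ≤ gMax 9 C := by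
  obtain ⟨x, y, a, b, h1, h2, hle⟩ := lower_master 9 (by norm_num) C hC
  have g1 := hle s7c hs7c
  rw [gS_s7c] at g1
  have g2 := hle sd6 hsd6
  rw [gS_sd6] at g2
  have g3 := hle sd7 hsd7
  rw [gS_sd7] at g3
  have e1 := le_abs_self (2*a+5*b)
  have e2 := neg_le_abs (7*b)
  have e3 := le_abs_self (x+5*y)
  have e4 := neg_le_abs (6*y)
  have e5 := le_abs_self (x+6*y)
  have e6 := neg_le_abs (7*y)
  norm_num at h1 h2
  linarith

lemma lower10 (C : Fin 10 → Matrix (Fin 10) (Fin 10) ℝ) (hC : inSk 10 C) :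
    (28/25:ℝ) ≤ gMax 10 C := by
  obtain ⟨x, y, a, b, h1, h2, hle⟩ := lower_master 10 (by norm_num) C hC
  have g2 := hle sd7' hsd7'
  rw [gS_sd7'] at g2
  have g3 := hle s8c hs8c
  rw [gS_s8c] at g3
  have e1 := le_abs_self (x+6*y)
  have e2 := neg_le_abs (7*y)
  have e3 := le_abs_self (2*a+6*b)
  have e4 := neg_le_abs (8*b)
  norm_num at h1 h2
  linarith

lemma O9 : Ovalue 9 = 231/206 := by
  have hmem : (231/206 : ℝ) ∈ {y | ∃ C, inSk 9 C ∧ gMax 9 C = y} :=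
    ⟨_, inSk_C9, gMax9⟩
  have hlb : ∀ y ∈ {y : ℝ | ∃ C, inSk 9 C ∧ gMax 9 C = y}, (231/206:ℝ) ≤ y := by
    rintro y ⟨C, hC, rfl⟩
    exact lower9 C hC
  exact le_antisymm (csInf_le ⟨231/206, hlb⟩ hmem) (le_csInf ⟨_, hmem⟩ hlb)

lemma O10 : Ovalue 10 = 28/25 := by
  have hmem : (28/25 : ℝ) ∈ {y | ∃ C, inSk 10 C ∧ gMax 10 C = y} :=
    ⟨_, inSk_C10, gMax10⟩
  have hlb : ∀ y ∈ {y : ℝ | ∃ C, inSk 10 C ∧ gMax 10 C = y}, (28/25:ℝ) ≤ y := by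
    rintro y ⟨C, hC, rfl⟩
    exact lower10 C hC
  exact le_antisymm (csInf_le ⟨28/25, hlb⟩ hmem) (le_csInf ⟨_, hmem⟩ hlb)

theorem stmt17 :
    Ovalue 9 = 231/206 ∧
    Ovalue 10 = 28/25 ∧
    Ovalue 10 < Ovalue 9 ∧
    ∃ C : Fin 10 → Matrix (Fin 10) (Fin 10) ℝ,
      inSk 10 C ∧ gMax 10 C = 28/25 ∧ (28/25 : ℝ) < 231/206 := by
  refine ⟨O9, O10, by rw [O9, O10]; norm_num, ?_⟩
  exact ⟨Cfix 10 (19/100) (-1/100) (9/100) (-1/100), inSk_C10, gMax10, by norm_num⟩
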